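/- There exists an RCM over two binary variables X', Y' and a single unit that satisfies effectiveness, and satisfies the conjunction X' = 1 ∧ Y' = 1 ∧ Y'_{X'=1} = 0 ∧ X'_{Y'=0} = 1, and this RCM violates composition; moreover it is the constructive abstraction of a representable RCM over variables X (ternary) and Y (binary) satisfying X = 1 ∧ Y = 1 ∧ Y_{X=2} = 0 ∧ X_{Y=0} = 1, under the translation collapsing X ∈ {1,2} to X' = 1. -/

import Mathlib

/-!
The low-level model is induced by the SCM `X := 1`, `Y := 0 if X = 2 else 1`, so it is
representable. The translation `τ` sends both `X = 1` and `X = 2` to `X' = 1`, so at the high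
level the observed outcome `X' = 1, Y' = 1` coexists with `Y'_{X'=1} = 0`, the image of
`Y_{X=2} = 0`, and composition fails.

Both models have a single unit, so `H ≺_τ L` only asks that `τ` carry the unique low-level
counterfactual to the unique high-level one. Since `τ` acts variable by variable, a partial
valuation translates to the partial valuation obtained by applying `τ` to its values; and `τ` is
injective on the interventions `L` uses, so the outcomes of `L` and of `H` correspond one to one.
-/

open scoped Classical

/-- An intervention: a partial assignment of values to variables. -/
def Itv (V : Type*) (Val : V → Type*) := ∀ v, Option (Val v)

/-- A potential outcome `Y_x`: an outcome variable together with an intervention. -/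
structure PO (V : Type*) (Val : V → Type*) where
  Y : V
  x : Itv V Val

/-- A Rubin causal model (with a probability distribution on its units). -/
structure RCM (U : Type*) (V : Type*) (Val : V → Type*) where
  O : Set (PO V Val)
  F : (o : PO V Val) → U → Val o.Y
  P : U → ℝ
  P_nonneg : ∀ u, 0 ≤ P u
  P_sum : ∑ᶠ u, P u = 1

/-- Joint valuations ("counterfactuals") of a set of potential outcomes. -/
def CFVal {V : Type*} {Val : V → Type*} (O : Set (PO V Val)) :=
  (o : O) → Val o.1.Y

/-- The (pushforward) counterfactual distribution of an RCM, computed on a set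
of potential outcomes. -/
noncomputable def RCM.cfOn {U V : Type*} {Val : V → Type*} (R : RCM U V Val)
    (O : Set (PO V Val)) (g : CFVal O) : ℝ :=
  ∑ᶠ u, if ∀ o : O, R.F o.1 u = g o then R.P u else 0

/-- The counterfactual distribution of an RCM on its own defined outcomes. -/
noncomputable def RCM.cf {U V : Type*} {Val : V → Type*} (R : RCM U V Val)
    (g : CFVal R.O) : ℝ := R.cfOn R.O g

/-- Effectiveness: intervened variables take their intervened values. -/
def RCM.Effective {U V : Type*} {Val : V → Type*} (R : RCM U V Val) : Prop :=
  ∀ o, o ∈ R.O → ∀ u, ∀ y : Val o.Y, o.x o.Y = some y → R.F o u = y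

/-- Update an intervention at one variable. -/
noncomputable def upd {V : Type*} {Val : V → Type*} (x : Itv V Val) (Y : V) (y : Val Y) :
    Itv V Val :=
  fun v => if h : v = Y then some (cast (congrArg Val h.symm) y) else x v

/-- Composition, at every unit, whenever the relevant outcomes are defined. -/
def RCM.Composition {U V : Type*} {Val : V → Type*} (R : RCM U V Val) : Prop :=
  ∀ (u : U) (Y Z : V) (w : Itv V Val),
    (⟨Y, w⟩ : PO V Val) ∈ R.O → (⟨Z, w⟩ : PO V Val) ∈ R.O →
    (⟨Z, upd w Y (R.F ⟨Y, w⟩ u)⟩ : PO V Val) ∈ R.O →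
    R.F ⟨Z, upd w Y (R.F ⟨Y, w⟩ u)⟩ u = R.F ⟨Z, w⟩ u

/-- Reversibility, at every unit, whenever the relevant outcomes are defined. -/
def RCM.Reversibility {U V : Type*} {Val : V → Type*} (R : RCM U V Val) : Prop :=
  ∀ (u : U) (Y Z : V) (w : Itv V Val) (y : Val Y) (z : Val Z), Y ≠ Z →
    (⟨Y, upd w Z z⟩ : PO V Val) ∈ R.O → (⟨Z, upd w Y y⟩ : PO V Val) ∈ R.O →
    (⟨Y, w⟩ : PO V Val) ∈ R.O →
    R.F ⟨Y, upd w Z z⟩ u = y → R.F ⟨Z, upd w Y y⟩ u = z →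
    R.F ⟨Y, w⟩ u = y

/-- A structural causal model. -/
structure SCM (Uex : Type*) (V : Type*) (Val : V → Type*) where
  Pa : V → Set V
  Pa_irr : ∀ v, v ∉ Pa v
  f : (v : V) → ((w : V) → Val w) → Uex → Val v
  f_dep : ∀ v a b u, (∀ w ∈ Pa v, a w = b w) → f v a u = f v b u
  P : Uex → ℝ
  P_nonneg : ∀ u, 0 ≤ P u
  P_sum : ∑ᶠ u, P u = 1

/-- `s` solves the manipulated model `M_x` under exogenous setting `u`. -/
def SCM.IsSol {Uex V : Type*} {Val : V → Type*} (M : SCM Uex V Val)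
    (x : Itv V Val) (u : Uex) (s : ∀ w, Val w) : Prop :=
  ∀ w, s w = (x w).getD (M.f w s u)

/-- `M` has a unique solution under every intervention and exogenous setting. -/
def SCM.Uniq {Uex V : Type*} {Val : V → Type*} (M : SCM Uex V Val) : Prop :=
  ∀ (x : Itv V Val) (u : Uex), ∃! s, M.IsSol x u s

/-- The potential outcome `Y_x(u)` of an SCM with unique solutions. -/
noncomputable def SCM.po {Uex V : Type*} {Val : V → Type*} (M : SCM Uex V Val)
    (h : M.Uniq) (o : PO V Val) (u : Uex) : Val o.Y :=
  (h o.x u).exists.choose o.Y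

/-- The counterfactual distribution of an SCM on a set of potential outcomes. -/
noncomputable def SCM.cf {Uex V : Type*} {Val : V → Type*} (M : SCM Uex V Val)
    (h : M.Uniq) (O : Set (PO V Val)) (g : CFVal O) : ℝ :=
  ∑ᶠ u, if ∀ o : O, M.po h o.1 u = g o then M.P u else 0

/-- `M` represents `R`: the counterfactual distribution of `M` marginalizes to
that of `R` on the outcomes defined by `R`. -/
def Represents {Uex U V : Type*} {Val : V → Type*} (M : SCM Uex V Val) (h : M.Uniq)
    (R : RCM U V Val) : Prop :=
  ∀ g : CFVal R.O, M.cf h R.O g = R.cf g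

/-- `R` is representable by some SCM with unique solutions. -/
def RCM.Representable {U V : Type*} {Val : V → Type*} (R : RCM U V Val) : Prop :=
  ∃ (Uex : Type) (M : SCM Uex V Val) (h : M.Uniq), Finite Uex ∧ Represents M h R

/-- `R'` extends `R`. -/
def RCM.Extends {U V : Type*} {Val : V → Type*} (R' R : RCM U V Val) : Prop :=
  R.O ⊆ R'.O ∧ (∀ o ∈ R.O, R'.F o = R.F o) ∧ R'.P = R.P

/-- A full RCM defines every potential outcome. -/
def RCM.Full {U V : Type*} {Val : V → Type*} (R : RCM U V Val) : Prop :=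
  R.O = Set.univ

/-- `R'` is a submodel of `R`. -/
def Submodel {U V : Type*} {Val : V → Type*} (R' R : RCM U V Val) : Prop :=
  R'.O ⊆ R.O ∧ (∀ o ∈ R'.O, R'.F o = R.F o) ∧ R'.P = R.P

/-- A constructive translation from low-level variables `VL` to high-level
variables `VH`: a partition of (part of) `VL` into cells, one nonempty cell per
high-level variable, with a surjective value-map for each cell. -/
structure CTrans (VL : Type*) (ValL : VL → Type*) (VH : Type*) (ValH : VH → Type*) where
  cell : VL → Option VH
  cell_ne : ∀ Vh : VH, ∃ w, cell w = some Vh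
  tau : (Vh : VH) → ((w : {w : VL // cell w = some Vh}) → ValL w.1) → ValH Vh
  tau_surj : ∀ Vh, Function.Surjective (tau Vh)

/-- The translation of total low-level valuations. -/
def CTrans.tot {VL VH : Type*} {ValL : VL → Type*} {ValH : VH → Type*}
    (T : CTrans VL ValL VH ValH) (g : ∀ v, ValL v) : ∀ Vh, ValH Vh :=
  fun Vh => T.tau Vh (fun w => g w.1)

/-- The total valuations extending a partial valuation. -/
def extVals {V : Type*} {Val : V → Type*} (x : Itv V Val) : Set (∀ v, Val v) :=
  {g | ∀ v, ∀ c, x v = some c → g v = c}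

/-- Canonical extension of a translation to partial valuations:
`τ(x_L) = x_H` iff the `τ`-image of the extensions of `x_L` is the set of
extensions of `x_H`. -/
def CTrans.PartTrans {VL VH : Type*} {ValL : VL → Type*} {ValH : VH → Type*}
    (T : CTrans VL ValL VH ValH) (xL : Itv VL ValL) (xH : Itv VH ValH) : Prop :=
  T.tot '' extVals xL = extVals xH

/-- The valuations of the cell of `Vh` that agree with `x_L` on the part of
its domain lying in that cell. -/
def CTrans.theta {VL VH : Type*} {ValL : VL → Type*} {ValH : VH → Type*}
    (T : CTrans VL ValL VH ValH) (xL : Itv VL ValL) (Vh : VH) :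
    Set ((w : {w : VL // T.cell w = some Vh}) → ValL w.1) :=
  {p | ∀ (w : {w : VL // T.cell w = some Vh}) (c : ValL w.1), xL w.1 = some c → p w = c}

/-- The interventions appearing in a set of potential outcomes. -/
def Intervs {V : Type*} {Val : V → Type*} (O : Set (PO V Val)) : Set (Itv V Val) :=
  {x | ∃ Y, (⟨Y, x⟩ : PO V Val) ∈ O}

/-- The partial valuation recording the outcomes a counterfactual assigns
under a fixed intervention. -/
noncomputable def ypart {V : Type*} {Val : V → Type*} (O : Set (PO V Val))
    (g : CFVal O) (x : Itv V Val) : Itv V Val :=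
  fun Y => if h : (⟨Y, x⟩ : PO V Val) ∈ O then some (g ⟨⟨Y, x⟩, h⟩) else none

/-- Counterfactual translation induced by a constructive translation. -/
def CTrans.CFTrans {VL VH : Type*} {ValL : VL → Type*} {ValH : VH → Type*}
    (T : CTrans VL ValL VH ValH) (OL : Set (PO VL ValL)) (OH : Set (PO VH ValH))
    (gL : CFVal OL) (gH : CFVal OH) : Prop :=
  (∀ xL ∈ Intervs OL, ∃ xH ∈ Intervs OH, T.PartTrans xL xH) ∧
  (∀ xH ∈ Intervs OH, ∃ xL ∈ Intervs OL, T.PartTrans xL xH) ∧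
  (∀ xL ∈ Intervs OL, ∀ xH ∈ Intervs OH, T.PartTrans xL xH →
    T.PartTrans (ypart OL gL xL) (ypart OH gH xH))

/-- `H ≺_τ L`: the counterfactual distribution of `H` is the pushforward of
that of `L` under the counterfactual translation induced by `T`. -/
def Abstraction {UH UL VH VL : Type*} {ValH : VH → Type*} {ValL : VL → Type*}
    (T : CTrans VL ValL VH ValH) (H : RCM UH VH ValH) (L : RCM UL VL ValL) : Prop :=
  ∀ gH : CFVal H.O,
    H.cf gH = ∑ᶠ gL : CFVal L.O,
      if T.CFTrans L.O H.O gL gH then L.cf gL else 0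

/-- Low-level value spaces: `X` (variable `0`) is ternary, `Y` (variable `1`)
is binary. -/
@[reducible] def Val10L : Fin 2 → Type := fun v => if v = 0 then Fin 3 else Fin 2

/-- The empty intervention, high level. -/
def e2H : Itv (Fin 2) (fun _ => Fin 2) := fun _ => none

/-- The empty intervention, low level. -/
def e2L : Itv (Fin 2) Val10L := fun _ => none

open Function Set

section SingleUnit

variable {U V : Type*} {Val : V → Type*}

def RCM.cfAt (R : RCM U V Val) (u : U) : CFVal R.O := fun o => R.F o.1 u

lemma RCM.cf_eq_ite [Unique U] (R : RCM U V Val) (g : CFVal R.O) :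
    R.cf g = if g = R.cfAt default then 1 else 0 := by
  have hP : R.P default = 1 := by simpa only [finsum_unique] using R.P_sum
  rw [RCM.cf, RCM.cfOn, finsum_unique, hP]
  exact if_congr ⟨fun h => funext fun o => (h o).symm, fun h o => by rw [h]; rfl⟩ rfl rfl

theorem abstraction_of_cfTrans_iff {UH UL VH VL : Type*} {ValH : VH → Type*} {ValL : VL → Type*}
    [Unique UH] [Unique UL] {T : CTrans VL ValL VH ValH} {H : RCM UH VH ValH} {L : RCM UL VL ValL}
    (h : ∀ gH, T.CFTrans L.O H.O (L.cfAt default) gH ↔ gH = H.cfAt default) :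
    Abstraction T H L := by
  intro gH
  rw [H.cf_eq_ite, finsum_eq_single _ (L.cfAt default), L.cf_eq_ite, if_pos rfl, h]
  intro gL hgL
  rw [L.cf_eq_ite, if_neg hgL, ite_self]

end SingleUnit

section InducedRCM

variable {Uex V : Type*} {Val : V → Type*}

noncomputable def SCM.toRCM (M : SCM Uex V Val) (h : M.Uniq) (O : Set (PO V Val)) :
    RCM Uex V Val where
  O := O
  F := M.po h
  P := M.P
  P_nonneg := M.P_nonneg
  P_sum := M.P_sum

lemma SCM.representable_toRCM {Uex : Type} [Finite Uex] (M : SCM Uex V Val) (h : M.Uniq)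
    (O : Set (PO V Val)) : (M.toRCM h O).Representable :=
  ⟨Uex, M, h, inferInstance, fun _ => rfl⟩

lemma SCM.po_eq_of_isSol {M : SCM Uex V Val} (h : M.Uniq) {o : PO V Val} {u : Uex}
    {s : ∀ w, Val w} (hs : M.IsSol o.x u s) : M.po h o u = s o.Y :=
  congrFun ((h o.x u).unique (h o.x u).exists.choose_spec hs) o.Y

end InducedRCM

lemma image_elim_univ_singleton {α β : Type*} {f : α → β} (hf : Surjective f) (o : Option α) :
    f '' o.elim univ singleton = (o.map f).elim univ singleton := by
  cases o <;> simp [hf.range_eq]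

lemma elim_univ_singleton_inj {β : Type*} [Nontrivial β] {o o' : Option β} :
    (o.elim univ singleton : Set β) = o'.elim univ singleton ↔ o = o' := by
  cases o <;> cases o' <;> simp [(singleton_ne_univ _).symm, singleton_ne_univ]

lemma eq_of_univ_pi_eq {ι : Type*} {α : ι → Type*} {s t : ∀ i, Set (α i)}
    (hs : (univ.pi s).Nonempty) (h : univ.pi s = univ.pi t) : s = t := by
  funext i
  rw [← eval_image_univ_pi hs, h, eval_image_univ_pi (h ▸ hs)]

section Translation

variable {V : Type*} {ValL ValH : V → Type*}

def mapItv (f : ∀ v, ValL v → ValH v) (x : Itv V ValL) : Itv V ValH :=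
  fun v => (x v).map (f v)

def mapPO (f : ∀ v, ValL v → ValH v) (o : PO V ValL) : PO V ValH :=
  ⟨o.Y, mapItv f o.x⟩

lemma mapItv_upd (f : ∀ v, ValL v → ValH v) (x : Itv V ValL) (Y : V) (y : ValL Y) :
    mapItv f (upd x Y y) = upd (mapItv f x) Y (f Y y) := by
  funext v
  by_cases h : v = Y
  · subst h
    simp [mapItv, upd]
  · simp [mapItv, upd, h]

def CTrans.ofMaps (f : ∀ v, ValL v → ValH v) (hf : ∀ v, Surjective (f v)) :
    CTrans V ValL V ValH where
  cell := some
  cell_ne v := ⟨v, rfl⟩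
  tau v p := f v (p ⟨v, rfl⟩)
  tau_surj v y := by
    obtain ⟨c, rfl⟩ := hf v y
    exact ⟨fun w => (Option.some_injective _ w.2).symm ▸ c, rfl⟩

lemma extVals_eq_pi (x : Itv V ValL) :
    extVals x = univ.pi fun v => (x v).elim univ singleton := by
  ext g
  simp only [extVals, mem_ofPred_eq, mem_pi, mem_univ, true_implies]
  refine forall_congr' fun v => ?_
  cases x v <;> simp

lemma CTrans.partTrans_ofMaps_iff [∀ v, Nontrivial (ValH v)] {f : ∀ v, ValL v → ValH v}
    (hf : ∀ v, Surjective (f v)) {xL : Itv V ValL} {xH : Itv V ValH} :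
    (CTrans.ofMaps f hf).PartTrans xL xH ↔ xH = mapItv f xL := by
  have himage : (CTrans.ofMaps f hf).tot '' extVals xL = extVals (mapItv f xL) := by
    rw [extVals_eq_pi, extVals_eq_pi, show (CTrans.ofMaps f hf).tot = Pi.map f from rfl,
      piMap_image_univ_pi]
    simp only [image_elim_univ_singleton (hf _)]
    rfl
  rw [CTrans.PartTrans, himage]
  refine ⟨fun h => ?_, fun h => h ▸ rfl⟩
  rw [extVals_eq_pi, extVals_eq_pi] at h
  funext v
  refine (elim_univ_singleton_inj.mp (congrFun (eq_of_univ_pi_eq ?_ h) v)).symm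
  exact univ_pi_nonempty_iff.mpr fun v => by cases mapItv f xL v <;> simp

lemma mem_image_mapPO_iff {f : ∀ v, ValL v → ValH v} {O : Set (PO V ValL)}
    (hinj : InjOn (mapItv f) (Intervs O)) {xL : Itv V ValL} (hxL : xL ∈ Intervs O) (Y : V) :
    (⟨Y, mapItv f xL⟩ : PO V ValH) ∈ mapPO f '' O ↔ (⟨Y, xL⟩ : PO V ValL) ∈ O := by
  refine ⟨?_, fun h => ⟨_, h, rfl⟩⟩
  rintro ⟨⟨Y', x'⟩, ho, he⟩
  simp only [mapPO, PO.mk.injEq] at he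
  obtain ⟨rfl, he⟩ := he
  rwa [← hinj ⟨Y', ho⟩ hxL he]

lemma intervs_image_mapPO (f : ∀ v, ValL v → ValH v) (O : Set (PO V ValL)) :
    Intervs (mapPO f '' O) = mapItv f '' Intervs O := by
  ext xH
  constructor
  · rintro ⟨Y, o, ho, he⟩
    exact ⟨o.x, ⟨o.Y, ho⟩, congrArg PO.x he⟩
  · rintro ⟨xL, ⟨Y, hY⟩, rfl⟩
    exact ⟨Y, _, hY, rfl⟩

theorem CTrans.cfTrans_ofMaps_iff {UL UH : Type*} [∀ v, Nontrivial (ValH v)]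
    {f : ∀ v, ValL v → ValH v} (hf : ∀ v, Surjective (f v)) {L : RCM UL V ValL} {H : RCM UH V ValH}
    (hO : H.O = mapPO f '' L.O) (hinj : InjOn (mapItv f) (Intervs L.O)) {uL : UL} {uH : UH}
    (hF : ∀ o ∈ L.O, H.F (mapPO f o) uH = f o.Y (L.F o uL)) (gH : CFVal H.O) :
    (CTrans.ofMaps f hf).CFTrans L.O H.O (L.cfAt uL) gH ↔ gH = H.cfAt uH := by
  have hI : Intervs H.O = mapItv f '' Intervs L.O := hO ▸ intervs_image_mapPO f L.O
  have hmem : ∀ xL ∈ Intervs L.O, ∀ Y,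
      (⟨Y, mapItv f xL⟩ : PO V ValH) ∈ H.O ↔ (⟨Y, xL⟩ : PO V ValL) ∈ L.O :=
    fun xL hxL Y => hO ▸ mem_image_mapPO_iff hinj hxL Y
  have hA : ∀ xL ∈ Intervs L.O, ∃ xH ∈ Intervs H.O, (CTrans.ofMaps f hf).PartTrans xL xH :=
    fun xL hxL => ⟨_, hI ▸ mem_image_of_mem _ hxL, (partTrans_ofMaps_iff hf).2 rfl⟩
  have hB : ∀ xH ∈ Intervs H.O, ∃ xL ∈ Intervs L.O, (CTrans.ofMaps f hf).PartTrans xL xH := by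
    rw [hI]
    rintro _ ⟨xL, hxL, rfl⟩
    exact ⟨xL, hxL, (partTrans_ofMaps_iff hf).2 rfl⟩
  rw [CTrans.CFTrans, and_iff_right hA, and_iff_right hB]
  simp only [partTrans_ofMaps_iff]
  constructor
  · intro hC
    funext ⟨oH, hoH⟩
    obtain ⟨⟨Y, xL⟩, hoL, rfl⟩ : oH ∈ mapPO f '' L.O := hO ▸ hoH
    have hxL : xL ∈ Intervs L.O := ⟨Y, hoL⟩
    have := congrFun (hC xL hxL _ (hI ▸ mem_image_of_mem _ hxL) rfl) Y
    have hoH' : (⟨Y, mapItv f xL⟩ : PO V ValH) ∈ H.O := hoH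
    simp only [ypart, mapItv, dif_pos hoL, Option.map_some] at this
    simp only [dif_pos hoH', Option.some_inj] at this
    exact this.trans (hF _ hoL).symm
  · rintro rfl xL hxL _ _ rfl
    funext Y
    by_cases hY : (⟨Y, xL⟩ : PO V ValL) ∈ L.O
    · simp only [ypart, mapItv, dif_pos hY, dif_pos ((hmem xL hxL Y).2 hY), Option.map_some,
        RCM.cfAt]
      exact congrArg some (hF _ hY)
    · simp only [ypart, mapItv, dif_neg hY, dif_neg ((hmem xL hxL Y).not.2 hY), Option.map_none]

end Translation

namespace TernaryCollapse

noncomputable def collapse : (v : Fin 2) → Val10L v → Fin 2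
  | 0, a => if a = (0 : Fin 3) then 0 else 1
  | 1, b => b

lemma collapse_zero_of_ne {a : Fin 3} (ha : a ≠ 0) : collapse 0 a = 1 := if_neg ha

lemma collapse_surjective : ∀ v, Surjective (collapse v)
  | 0 => fun b => by
    fin_cases b
    exacts [⟨(0 : Fin 3), if_pos rfl⟩, ⟨(1 : Fin 3), collapse_zero_of_ne (by decide)⟩]
  | 1 => fun b => ⟨b, rfl⟩

noncomputable def lowSCM : SCM Unit (Fin 2) Val10L where
  Pa v := if v = 1 then {0} else ∅
  Pa_irr v := by fin_cases v <;> simp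
  f v s _ := match v with
    | 0 => (1 : Fin 3)
    | 1 => if s 0 = (2 : Fin 3) then (0 : Fin 2) else (1 : Fin 2)
  f_dep v a b _ hab := by
    fin_cases v
    · rfl
    · simp only [hab 0 (by simp)]
  P _ := 1
  P_nonneg _ := zero_le_one
  P_sum := finsum_unique _

noncomputable def lowSol (x : Itv (Fin 2) Val10L) : ∀ v, Val10L v
  | 0 => (x 0).getD (1 : Fin 3)
  | 1 => (x 1).getD (if (x 0).getD (1 : Fin 3) = (2 : Fin 3) then (0 : Fin 2) else (1 : Fin 2))

lemma lowSCM_isSol_iff {x : Itv (Fin 2) Val10L} {u : Unit} {s : ∀ v, Val10L v} :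
    lowSCM.IsSol x u s ↔ s = lowSol x := by
  refine ⟨fun hs => ?_, fun hs w => hs ▸ by fin_cases w <;> rfl⟩
  have h0 : s 0 = lowSol x 0 := hs 0
  funext v
  fin_cases v
  · exact h0
  · calc s 1 = (x 1).getD (if s 0 = (2 : Fin 3) then (0 : Fin 2) else (1 : Fin 2)) := hs 1
      _ = lowSol x 1 := by rw [h0]; rfl

lemma lowSCM_uniq : lowSCM.Uniq := fun x _ =>
  ⟨lowSol x, lowSCM_isSol_iff.2 rfl, fun _ hs => lowSCM_isSol_iff.1 hs⟩

noncomputable def lowRCM : RCM Unit (Fin 2) Val10L :=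
  lowSCM.toRCM lowSCM_uniq
    {⟨0, e2L⟩, ⟨1, e2L⟩, ⟨1, upd e2L 0 (2 : Fin 3)⟩, ⟨0, upd e2L 1 (0 : Fin 2)⟩}

lemma lowRCM_F (o : PO (Fin 2) Val10L) (u : Unit) : lowRCM.F o u = lowSol o.x o.Y :=
  SCM.po_eq_of_isSol lowSCM_uniq (lowSCM_isSol_iff.2 rfl)

noncomputable def highRCM : RCM Unit (Fin 2) (fun _ => Fin 2) where
  O := {⟨0, e2H⟩, ⟨1, e2H⟩, ⟨1, upd e2H 0 1⟩, ⟨0, upd e2H 1 0⟩}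
  F o _ := (o.x o.Y).getD (if o.Y = 1 ∧ o.x 0 = some 1 then 0 else 1)
  P _ := 1
  P_nonneg _ := zero_le_one
  P_sum := finsum_unique _

lemma highRCM_effective : highRCM.Effective := by
  intro o _ u y hy
  simp only [highRCM, hy, Option.getD_some]

lemma mapItv_collapse_e2L : mapItv collapse e2L = e2H := rfl

lemma highRCM_O_eq_image : highRCM.O = mapPO collapse '' lowRCM.O := by
  simp only [highRCM, lowRCM, SCM.toRCM, image_insert_eq, image_singleton, mapPO,
    mapItv_upd, mapItv_collapse_e2L, collapse_zero_of_ne (by decide : (2 : Fin 3) ≠ 0)]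
  rfl

-- `collapse` identifies `X = 1` with `X = 2`, but no outcome of `lowRCM` is taken under `X := 1`.
lemma mapItv_collapse_injOn : InjOn (mapItv collapse) (Intervs lowRCM.O) := by
  rintro x ⟨Y, hx⟩ x' ⟨Y', hx'⟩ h
  simp only [lowRCM, SCM.toRCM, mem_insert_iff, mem_singleton_iff, PO.mk.injEq] at hx hx'
  have h0 := congrFun h 0
  have h1 := congrFun h 1
  rcases hx with ⟨-, rfl⟩ | ⟨-, rfl⟩ | ⟨-, rfl⟩ | ⟨-, rfl⟩ <;>
    rcases hx' with ⟨-, rfl⟩ | ⟨-, rfl⟩ | ⟨-, rfl⟩ | ⟨-, rfl⟩ <;>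
    simp_all [mapItv, upd, e2L, collapse]

lemma lowRCM_F_values (u : Unit) :
    lowRCM.F ⟨0, e2L⟩ u = (1 : Fin 3) ∧ lowRCM.F ⟨1, e2L⟩ u = (1 : Fin 2) ∧
      lowRCM.F ⟨1, upd e2L 0 (2 : Fin 3)⟩ u = (0 : Fin 2) ∧
      lowRCM.F ⟨0, upd e2L 1 (0 : Fin 2)⟩ u = (1 : Fin 3) := by
  simp only [lowRCM_F]
  refine ⟨rfl, if_neg (show (1 : Fin 3) ≠ 2 by decide), ?_, ?_⟩ <;> simp [lowSol, upd, e2L]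

lemma highRCM_F_values (u : Unit) :
    highRCM.F ⟨0, e2H⟩ u = 1 ∧ highRCM.F ⟨1, e2H⟩ u = 1 ∧
      highRCM.F ⟨1, upd e2H 0 1⟩ u = 0 ∧ highRCM.F ⟨0, upd e2H 1 0⟩ u = 1 := by
  simp [highRCM, upd, e2H]

lemma highRCM_F_mapPO :
    ∀ o ∈ lowRCM.O, highRCM.F (mapPO collapse o) () = collapse o.Y (lowRCM.F o ()) := by
  obtain ⟨l1, l2, l3, l4⟩ := lowRCM_F_values ()
  obtain ⟨h1, h2, h3, h4⟩ := highRCM_F_values ()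
  intro o ho
  simp only [lowRCM, SCM.toRCM, mem_insert_iff, mem_singleton_iff] at ho
  rcases ho with rfl | rfl | rfl | rfl
  · rw [l1, mapPO, mapItv_collapse_e2L, h1, collapse_zero_of_ne (by decide)]
  · rw [l2, mapPO, mapItv_collapse_e2L, h2]
    rfl
  · rw [l3, mapPO, mapItv_upd, mapItv_collapse_e2L, collapse_zero_of_ne (by decide), h3]
    rfl
  · rw [l4, mapPO, mapItv_upd, mapItv_collapse_e2L, collapse_zero_of_ne (by decide)]
    exact h4

lemma highRCM_not_composition : ¬ highRCM.Composition := by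
  obtain ⟨h1, h2, h3, -⟩ := highRCM_F_values ()
  intro hC
  have := hC () 0 1 e2H (by simp [highRCM]) (by simp [highRCM]) (by rw [h1]; simp [highRCM])
  rw [h1, h2, h3] at this
  exact absurd this (by decide)

end TernaryCollapse

open TernaryCollapse

theorem stmt10 :
    ∃ (H : RCM Unit (Fin 2) (fun _ => Fin 2)) (L : RCM Unit (Fin 2) Val10L)
      (T : CTrans (Fin 2) Val10L (Fin 2) (fun _ => Fin 2)),
      H.Effective ∧
      (⟨0, e2H⟩ : PO (Fin 2) (fun _ => Fin 2)) ∈ H.O ∧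
      (⟨1, e2H⟩ : PO (Fin 2) (fun _ => Fin 2)) ∈ H.O ∧
      (⟨1, upd e2H 0 1⟩ : PO (Fin 2) (fun _ => Fin 2)) ∈ H.O ∧
      (⟨0, upd e2H 1 0⟩ : PO (Fin 2) (fun _ => Fin 2)) ∈ H.O ∧
      (∀ u, H.F ⟨0, e2H⟩ u = 1 ∧ H.F ⟨1, e2H⟩ u = 1 ∧
        H.F ⟨1, upd e2H 0 1⟩ u = 0 ∧ H.F ⟨0, upd e2H 1 0⟩ u = 1) ∧
      ¬ H.Composition ∧
      L.Representable ∧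
      (⟨0, e2L⟩ : PO (Fin 2) Val10L) ∈ L.O ∧
      (⟨1, e2L⟩ : PO (Fin 2) Val10L) ∈ L.O ∧
      (⟨1, upd e2L 0 (2 : Fin 3)⟩ : PO (Fin 2) Val10L) ∈ L.O ∧
      (⟨0, upd e2L 1 (0 : Fin 2)⟩ : PO (Fin 2) Val10L) ∈ L.O ∧
      (∀ u, L.F ⟨0, e2L⟩ u = (1 : Fin 3) ∧ L.F ⟨1, e2L⟩ u = (1 : Fin 2) ∧
        L.F ⟨1, upd e2L 0 (2 : Fin 3)⟩ u = (0 : Fin 2) ∧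
        L.F ⟨0, upd e2L 1 (0 : Fin 2)⟩ u = (1 : Fin 3)) ∧
      T.cell 0 = some 0 ∧ T.cell 1 = some 1 ∧
      (∀ g : ∀ v, Val10L v,
        T.tot g 0 = (if g 0 = (0 : Fin 3) then 0 else 1) ∧
        T.tot g 1 = (g 1 : Fin 2)) ∧
      Abstraction T H L := by
  refine ⟨highRCM, lowRCM, CTrans.ofMaps collapse collapse_surjective, highRCM_effective,
    by simp [highRCM], by simp [highRCM], by simp [highRCM], by simp [highRCM], highRCM_F_values,
    highRCM_not_composition, lowSCM.representable_toRCM _ _, by simp [lowRCM, SCM.toRCM],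
    by simp [lowRCM, SCM.toRCM], by simp [lowRCM, SCM.toRCM], by simp [lowRCM, SCM.toRCM],
    lowRCM_F_values, rfl, rfl, fun g => ⟨rfl, rfl⟩, ?_⟩
  exact abstraction_of_cfTrans_iff fun gH => CTrans.cfTrans_ofMaps_iff _ highRCM_O_eq_image
    mapItv_collapse_injOn highRCM_F_mapPO gH
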